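/- arXiv:2505.02212 — 2 statements merged into one kernel-verified Lean document; each statement's English description precedes it below -/
import Mathlib

section
/- Let v : ℝ^d × [0,1] → ℝ^d be a velocity field such that (i) for some constant L ≥ 0, x ↦ v(x,t) is L-Lipschitz for every t ∈ [0,1], and (ii) v(·,t) is a triangular mapping for every t ∈ [0,1] (the j-th component v_j(x,t) depends only on x_1,…,x_j). Let γ, γ′ : [0,1] → ℝ^d be solutions of the ODE dγ(t)/dt = v(γ(t), t) on [0,1]. If the initial conditions agree in their first j coordinates, γ_k(0) = γ′_k(0) for all k ≤ j, then γ_k(t) = γ′_k(t) for all k ≤ j and all t ∈ [0,1]. Consequently, for each t ∈ [0,1] the time-t flow map x_0 ↦ γ^{x_0}(t) (where γ^{x_0} is the solution with γ^{x_0}(0) = x_0) is a triangular mapping of ℝ^d. -/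
/-- A map `F : ℝ^d → ℝ^d` is triangular if its `j`-th component depends only on
the first `j` coordinates (indices `k ≤ j`). -/
def Triangular {d : ℕ} (F : (Fin d → ℝ) → (Fin d → ℝ)) : Prop :=
  ∀ j : Fin d, ∀ x y : Fin d → ℝ, (∀ k, k ≤ j → x k = y k) → F x j = F y j

open Set NNReal

/-!
Fix `j` and let `T` zero out all coordinates `k > j`. Triangularity of `v` gives
`T (v x t) = T (v (T x) t)`, so the truncation `T ∘ γ` of any solution solves the ODE with
field `y ↦ T (v y t)`; this field is still `L`-Lipschitz because `T` is a contraction for the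
sup norm. Uniqueness for Lipschitz ODEs (Grönwall) then shows that the truncations of two
solutions agree whenever they agree at time `0`.
-/

theorem ODE_solution_unique_comp_of_semiconj {E F : Type*} [NormedAddCommGroup E]
    [NormedSpace ℝ E] [NormedAddCommGroup F] [NormedSpace ℝ F] (T : E →L[ℝ] F)
    {v : ℝ → E → E} {w : ℝ → F → F} {K : ℝ≥0} {f g : ℝ → E} {a b : ℝ}
    (hw : ∀ t ∈ Ico a b, LipschitzWith K (w t))
    (hvw : ∀ t ∈ Ico a b, ∀ x, T (v t x) = w t (T x))
    (hf : ∀ t ∈ Icc a b, HasDerivAt f (v t (f t)) t)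
    (hg : ∀ t ∈ Icc a b, HasDerivAt g (v t (g t)) t)
    (ha : T (f a) = T (g a)) :
    EqOn (T ∘ f) (T ∘ g) (Icc a b) := by
  have hcont : ∀ h : ℝ → E, (∀ t ∈ Icc a b, HasDerivAt h (v t (h t)) t) →
      ContinuousOn (T ∘ h) (Icc a b) :=
    fun h hh => T.continuous.comp_continuousOn (HasDerivAt.continuousOn hh)
  have hderiv : ∀ h : ℝ → E, (∀ t ∈ Icc a b, HasDerivAt h (v t (h t)) t) →
      ∀ t ∈ Ico a b, HasDerivWithinAt (T ∘ h) (w t (T (h t))) (Ici t) t := by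
    intro h hh t ht
    rw [← hvw t ht]
    exact (T.hasFDerivAt.comp_hasDerivAt t (hh t (Ico_subset_Icc_self ht))).hasDerivWithinAt
  exact ODE_solution_unique_of_mem_Icc_right (s := fun _ => univ)
    (fun t ht => (hw t ht).lipschitzOnWith) (hcont f hf) (hderiv f hf) (fun _ _ => mem_univ _)
    (hcont g hg) (hderiv g hg) (fun _ _ => mem_univ _) ha

section Truncation

variable {ι : Type*} [LE ι] [DecidableLE ι]

def truncation (j : ι) : (ι → ℝ) →L[ℝ] (ι → ℝ) :=
  ContinuousLinearMap.pi fun k => if k ≤ j then ContinuousLinearMap.proj k else 0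

theorem truncation_apply (j : ι) (x : ι → ℝ) (k : ι) :
    truncation j x k = if k ≤ j then x k else 0 := by
  simp only [truncation, ContinuousLinearMap.pi_apply]
  split_ifs <;> rfl

theorem truncation_eq_truncation_iff {j : ι} {x y : ι → ℝ} :
    truncation j x = truncation j y ↔ ∀ k ≤ j, x k = y k := by
  simp only [funext_iff, truncation_apply]
  refine ⟨fun h k hk => by simpa [hk] using h k, fun h k => ?_⟩
  split_ifs with hk
  exacts [h k hk, rfl]

theorem lipschitzWith_truncation [Fintype ι] (j : ι) : LipschitzWith 1 (truncation j) := by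
  refine AddMonoidHomClass.lipschitz_of_bound_nnnorm _ 1 fun x => ?_
  rw [one_mul]
  refine pi_nnnorm_le_iff.2 fun k => ?_
  rw [truncation_apply]
  split_ifs
  exacts [nnnorm_le_pi_nnnorm x k, by simp]

end Truncation

theorem Triangular.truncation_apply_truncation {d : ℕ} {F : (Fin d → ℝ) → (Fin d → ℝ)}
    (hF : Triangular F) (j : Fin d) (x : Fin d → ℝ) :
    truncation j (F (truncation j x)) = truncation j (F x) :=
  truncation_eq_truncation_iff.2 fun k hk =>
    hF k _ _ fun m hm => by rw [truncation_apply, if_pos (hm.trans hk)]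

theorem ODE_solution_apply_eq_of_triangular {d : ℕ} {v : (Fin d → ℝ) → ℝ → (Fin d → ℝ)}
    {L a b : ℝ} (hlip : ∀ t ∈ Icc a b, ∀ x y : Fin d → ℝ, ‖v x t - v y t‖ ≤ L * ‖x - y‖)
    (htri : ∀ t ∈ Icc a b, Triangular fun x => v x t) {γ γ' : ℝ → Fin d → ℝ}
    (hγ : ∀ t ∈ Icc a b, HasDerivAt γ (v (γ t) t) t)
    (hγ' : ∀ t ∈ Icc a b, HasDerivAt γ' (v (γ' t) t) t) {j : Fin d}
    (ha : ∀ k ≤ j, γ a k = γ' a k) : ∀ t ∈ Icc a b, ∀ k ≤ j, γ t k = γ' t k := by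
  have hw : ∀ t ∈ Ico a b, LipschitzWith (1 * L.toNNReal) (truncation j ∘ fun x => v x t) :=
    fun t ht => (lipschitzWith_truncation j).comp <| LipschitzWith.of_dist_le' fun x y => by
      simpa only [dist_eq_norm] using hlip t (Ico_subset_Icc_self ht) x y
  have hvw : ∀ t ∈ Ico a b, ∀ x,
      truncation j (v x t) = truncation j (v (truncation j x) t) :=
    fun t ht x => ((htri t (Ico_subset_Icc_self ht)).truncation_apply_truncation j x).symm
  have key := ODE_solution_unique_comp_of_semiconj (truncation j) (v := fun t x => v x t) hw hvw
    hγ hγ' (truncation_eq_truncation_iff.2 ha)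
  exact fun t ht => truncation_eq_truncation_iff.1 (key ht)

theorem flow_triangular_general {d : ℕ} (v : (Fin d → ℝ) → ℝ → (Fin d → ℝ)) (L : ℝ)
    (hlip : ∀ t ∈ Set.Icc (0 : ℝ) 1, ∀ a b : Fin d → ℝ, ‖v a t - v b t‖ ≤ L * ‖a - b‖)
    (htri : ∀ t ∈ Set.Icc (0 : ℝ) 1, ∀ j : Fin d, ∀ a b : Fin d → ℝ,
      (∀ k, k ≤ j → a k = b k) → v a t j = v b t j)
    (Φ : (Fin d → ℝ) → ℝ → (Fin d → ℝ))
    (hΦ0 : ∀ x₀, Φ x₀ 0 = x₀)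
    (hΦ : ∀ x₀, ∀ t ∈ Set.Icc (0 : ℝ) 1, HasDerivAt (Φ x₀) (v (Φ x₀ t) t) t) :
    (∀ γ γ' : ℝ → (Fin d → ℝ),
        (∀ t ∈ Set.Icc (0 : ℝ) 1, HasDerivAt γ (v (γ t) t) t) →
        (∀ t ∈ Set.Icc (0 : ℝ) 1, HasDerivAt γ' (v (γ' t) t) t) →
        ∀ j : Fin d, (∀ k, k ≤ j → γ 0 k = γ' 0 k) →
          ∀ t ∈ Set.Icc (0 : ℝ) 1, ∀ k, k ≤ j → γ t k = γ' t k) ∧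
      (∀ t ∈ Set.Icc (0 : ℝ) 1, Triangular fun x₀ => Φ x₀ t) := by
  refine ⟨fun γ γ' hγ hγ' j => ODE_solution_apply_eq_of_triangular hlip htri hγ hγ',
    fun t ht j x y hxy => ?_⟩
  exact ODE_solution_apply_eq_of_triangular hlip htri (hΦ x) (hΦ y)
    (by simpa only [hΦ0] using hxy) t ht j le_rfl

/-- For a velocity field `v` on `ℝ^d` that is Lipschitz in space (uniformly in
time) and triangular in its space variable for each time, any two solutions of
the ODE on `[0,1]` whose initial conditions agree in the first `j` coordinates
agree in the first `j` coordinates at all times; consequently, the time-`t`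
flow map `x₀ ↦ Φ x₀ t` is a triangular mapping for every `t ∈ [0,1]`. -/
theorem flow_triangular {d : ℕ} (v : (Fin d → ℝ) → ℝ → (Fin d → ℝ)) (L : ℝ) (hL : 0 ≤ L)
    (hlip : ∀ t ∈ Set.Icc (0 : ℝ) 1, ∀ a b : Fin d → ℝ, ‖v a t - v b t‖ ≤ L * ‖a - b‖)
    (htri : ∀ t ∈ Set.Icc (0 : ℝ) 1, ∀ j : Fin d, ∀ a b : Fin d → ℝ,
      (∀ k, k ≤ j → a k = b k) → v a t j = v b t j)
    (Φ : (Fin d → ℝ) → ℝ → (Fin d → ℝ))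
    (hΦ0 : ∀ x₀, Φ x₀ 0 = x₀)
    (hΦ : ∀ x₀, ∀ t ∈ Set.Icc (0 : ℝ) 1, HasDerivAt (Φ x₀) (v (Φ x₀ t) t) t) :
    (∀ γ γ' : ℝ → (Fin d → ℝ),
        (∀ t ∈ Set.Icc (0 : ℝ) 1, HasDerivAt γ (v (γ t) t) t) →
        (∀ t ∈ Set.Icc (0 : ℝ) 1, HasDerivAt γ' (v (γ' t) t) t) →
        ∀ j : Fin d, (∀ k, k ≤ j → γ 0 k = γ' 0 k) →
          ∀ t ∈ Set.Icc (0 : ℝ) 1, ∀ k, k ≤ j → γ t k = γ' t k) ∧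
      (∀ t ∈ Set.Icc (0 : ℝ) 1, Triangular fun x₀ => Φ x₀ t) :=
  flow_triangular_general v L hlip htri Φ hΦ0 hΦ
end

section
/- Let v : ℝ^d × [0,1] → ℝ^d be a velocity field such that (i) for some constant L ≥ 0, x ↦ v(x,t) is L-Lipschitz for every t ∈ [0,1], and (ii) v(·,t) is a triangular mapping for every t ∈ [0,1]. Suppose that for every initial condition x_0 ∈ ℝ^d there is a (necessarily unique) solution γ^{x_0} : [0,1] → ℝ^d of dγ/dt = v(γ(t),t) with γ^{x_0}(0) = x_0. Then for every t ∈ [0,1], the flow map 𝒯(·,t) : x_0 ↦ γ^{x_0}(t) is a TMI mapping: it is triangular, and for each j ∈ {1,…,d}, whenever two initial conditions x_0, x_0′ agree in their first j−1 coordinates and satisfy (x_0)_j < (x_0′)_j, one has γ^{x_0}_j(t) < γ^{x_0′}_j(t). -/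
/-- A TMI mapping: a triangular map each of whose components is strictly
increasing in its last coordinate, for every fixed prefix. -/
def IsTMI {d : ℕ} (F : (Fin d → ℝ) → (Fin d → ℝ)) : Prop :=
  Triangular F ∧
    ∀ j : Fin d, ∀ x y : Fin d → ℝ,
      (∀ k, k < j → x k = y k) → x j < y j → F x j < F y j

open Set

section Gronwall

variable {E : Type*} [NormedAddCommGroup E] [NormedSpace ℝ E] {f f' : ℝ → E} {K a b : ℝ}

theorem eq_zero_of_norm_deriv_le_of_left_eq_zero
    (hf : ∀ x ∈ Icc a b, HasDerivAt f (f' x) x) (ha : f a = 0)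
    (bound : ∀ x ∈ Icc a b, ‖f' x‖ ≤ K * ‖f x‖) :
    ∀ x ∈ Icc a b, f x = 0 :=
  eq_zero_of_abs_deriv_le_mul_abs_self_of_eq_zero_right
    (fun x hx => (hf x hx).continuousAt.continuousWithinAt)
    (fun x hx => (hf x (Ico_subset_Icc_self hx)).hasDerivWithinAt) ha
    (fun x hx => bound x (Ico_subset_Icc_self hx))

theorem eq_zero_of_norm_deriv_le_of_right_eq_zero
    (hf : ∀ x ∈ Icc a b, HasDerivAt f (f' x) x) (hb : f b = 0)
    (bound : ∀ x ∈ Icc a b, ‖f' x‖ ≤ K * ‖f x‖) :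
    ∀ x ∈ Icc a b, f x = 0 := by
  have hrefl : ∀ x ∈ Icc a b, a + b - x ∈ Icc a b := fun x hx =>
    ⟨by linarith [hx.2], by linarith [hx.1]⟩
  have hzero := eq_zero_of_norm_deriv_le_of_left_eq_zero (K := K)
    (f := fun x => f (a + b - x)) (f' := fun x => -f' (a + b - x))
    (fun x hx => (hf _ (hrefl x hx)).comp_const_sub (a + b) x) (by simpa using hb)
    (fun x hx => by simpa only [norm_neg] using bound _ (hrefl x hx))
  intro x hx
  simpa using hzero _ (hrefl x hx)

theorem pos_of_abs_deriv_le_mul_abs_self {f f' : ℝ → ℝ}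
    (hf : ∀ x ∈ Icc a b, HasDerivAt f (f' x) x) (ha : 0 < f a)
    (bound : ∀ x ∈ Icc a b, |f' x| ≤ K * |f x|) :
    ∀ x ∈ Icc a b, 0 < f x := by
  intro x hx
  by_contra! hfx
  have hsub : Icc a x ⊆ Icc a b := Icc_subset_Icc_right hx.2
  obtain ⟨s, hs, hfs⟩ := intermediate_value_Icc' hx.1
    (fun y hy => (hf y (hsub hy)).continuousAt.continuousWithinAt) ⟨hfx, ha.le⟩
  have hsub' : Icc a s ⊆ Icc a b := (Icc_subset_Icc_right hs.2).trans hsub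
  have := eq_zero_of_norm_deriv_le_of_right_eq_zero (K := K)
    (fun y hy => hf y (hsub' hy)) hfs (fun y hy => bound y (hsub' hy)) a ⟨le_rfl, hs.1⟩
  exact ha.ne' this

end Gronwall

theorem Triangular.abs_apply_sub_apply_le {d : ℕ} {F : (Fin d → ℝ) → (Fin d → ℝ)} {L : ℝ}
    (hF : Triangular F) (hlip : ∀ a b, ‖F a - F b‖ ≤ L * ‖a - b‖) {j : Fin d}
    {a b : Fin d → ℝ} (hab : ∀ k < j, a k = b k) :
    |F a j - F b j| ≤ L * |a j - b j| := by
  set c := Function.update a j (b j)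
  have hcb : F c j = F b j := hF j c b fun k hk => by
    rcases hk.lt_or_eq with hk | rfl
    · simpa [c, Function.update_of_ne hk.ne] using hab k hk
    · simp [c]
  have hac : a - c = Pi.single j (a j - b j) := by
    ext i
    rcases eq_or_ne i j with rfl | hij
    · simp [c]
    · simp [c, hij]
  calc |F a j - F b j| = ‖(F a - F c) j‖ := by rw [Pi.sub_apply, hcb, Real.norm_eq_abs]
    _ ≤ ‖F a - F c‖ := norm_le_pi_norm _ j
    _ ≤ L * ‖a - c‖ := hlip a c
    _ = L * |a j - b j| := by rw [hac, Pi.norm_single, Real.norm_eq_abs]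

section Flow

variable {d : ℕ} {v Φ : (Fin d → ℝ) → ℝ → (Fin d → ℝ)} {L : ℝ}

theorem flow_apply_eq_of_forall_le
    (hv : ∀ t ∈ Icc (0 : ℝ) 1, ∀ j : Fin d, ∀ a b : Fin d → ℝ,
      (∀ k < j, a k = b k) → |v a t j - v b t j| ≤ L * |a j - b j|)
    (hΦ0 : ∀ x₀, Φ x₀ 0 = x₀)
    (hΦ : ∀ x₀, ∀ t ∈ Icc (0 : ℝ) 1, HasDerivAt (Φ x₀) (v (Φ x₀ t) t) t)
    (j : Fin d) {x y : Fin d → ℝ} (hxy : ∀ k ≤ j, x k = y k) :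
    ∀ t ∈ Icc (0 : ℝ) 1, Φ x t j = Φ y t j := by
  induction j using WellFoundedLT.induction with
  | ind j ih =>
    have hzero := eq_zero_of_norm_deriv_le_of_left_eq_zero (K := L)
      (f := fun t => Φ x t j - Φ y t j)
      (fun t ht => (hasDerivAt_pi.1 (hΦ x t ht) j).sub (hasDerivAt_pi.1 (hΦ y t ht) j))
      (by simp [hΦ0, hxy j le_rfl])
      (fun t ht => hv t ht j _ _ fun k hk =>
        ih k hk (fun i hi => hxy i (hi.trans hk.le)) t ht)
    exact fun t ht => sub_eq_zero.mp (hzero t ht)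

theorem flow_apply_lt
    (hv : ∀ t ∈ Icc (0 : ℝ) 1, ∀ j : Fin d, ∀ a b : Fin d → ℝ,
      (∀ k < j, a k = b k) → |v a t j - v b t j| ≤ L * |a j - b j|)
    (hΦ0 : ∀ x₀, Φ x₀ 0 = x₀)
    (hΦ : ∀ x₀, ∀ t ∈ Icc (0 : ℝ) 1, HasDerivAt (Φ x₀) (v (Φ x₀ t) t) t)
    {j : Fin d} {x y : Fin d → ℝ} (hxy : ∀ k < j, x k = y k) (hlt : x j < y j) :
    ∀ t ∈ Icc (0 : ℝ) 1, Φ x t j < Φ y t j := by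
  have hpos := pos_of_abs_deriv_le_mul_abs_self (K := L)
    (f := fun t => Φ y t j - Φ x t j)
    (fun t ht => (hasDerivAt_pi.1 (hΦ y t ht) j).sub (hasDerivAt_pi.1 (hΦ x t ht) j))
    (by simpa [hΦ0] using hlt)
    (fun t ht => hv t ht j _ _ fun k hk =>
      (flow_apply_eq_of_forall_le hv hΦ0 hΦ k (fun i hi => hxy i (hi.trans_lt hk)) t ht).symm)
  exact fun t ht => sub_pos.mp (hpos t ht)

end Flow

theorem flow_tmi_general {d : ℕ} (v : (Fin d → ℝ) → ℝ → (Fin d → ℝ)) (L : ℝ)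
    (hlip : ∀ t ∈ Set.Icc (0 : ℝ) 1, ∀ a b : Fin d → ℝ, ‖v a t - v b t‖ ≤ L * ‖a - b‖)
    (htri : ∀ t ∈ Set.Icc (0 : ℝ) 1, ∀ j : Fin d, ∀ a b : Fin d → ℝ,
      (∀ k, k ≤ j → a k = b k) → v a t j = v b t j)
    (Φ : (Fin d → ℝ) → ℝ → (Fin d → ℝ))
    (hΦ0 : ∀ x₀, Φ x₀ 0 = x₀)
    (hΦ : ∀ x₀, ∀ t ∈ Set.Icc (0 : ℝ) 1, HasDerivAt (Φ x₀) (v (Φ x₀ t) t) t) :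
    ∀ t ∈ Set.Icc (0 : ℝ) 1, IsTMI fun x₀ => Φ x₀ t := by
  have hv : ∀ t ∈ Icc (0 : ℝ) 1, ∀ j : Fin d, ∀ a b : Fin d → ℝ,
      (∀ k < j, a k = b k) → |v a t j - v b t j| ≤ L * |a j - b j| :=
    fun t ht _ _ _ hab =>
      Triangular.abs_apply_sub_apply_le (F := (v · t)) (htri t ht) (hlip t ht) hab
  intro t ht
  exact ⟨fun j _ _ hxy => flow_apply_eq_of_forall_le hv hΦ0 hΦ j hxy t ht,
    fun _ _ _ hxy hlt => flow_apply_lt hv hΦ0 hΦ hxy hlt t ht⟩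

/-- For a velocity field `v` on `ℝ^d` that is Lipschitz in space (uniformly in
time) and triangular in its space variable for each time, the time-`t` flow
map `x₀ ↦ Φ x₀ t` of the ODE `dγ/dt = v(γ(t),t)` is a TMI mapping for every
`t ∈ [0,1]`: it is triangular, and strictly increasing in the `j`-th initial
coordinate for fixed first `j−1` initial coordinates. -/
theorem flow_tmi {d : ℕ} (v : (Fin d → ℝ) → ℝ → (Fin d → ℝ)) (L : ℝ) (hL : 0 ≤ L)
    (hlip : ∀ t ∈ Set.Icc (0 : ℝ) 1, ∀ a b : Fin d → ℝ, ‖v a t - v b t‖ ≤ L * ‖a - b‖)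
    (htri : ∀ t ∈ Set.Icc (0 : ℝ) 1, ∀ j : Fin d, ∀ a b : Fin d → ℝ,
      (∀ k, k ≤ j → a k = b k) → v a t j = v b t j)
    (Φ : (Fin d → ℝ) → ℝ → (Fin d → ℝ))
    (hΦ0 : ∀ x₀, Φ x₀ 0 = x₀)
    (hΦ : ∀ x₀, ∀ t ∈ Set.Icc (0 : ℝ) 1, HasDerivAt (Φ x₀) (v (Φ x₀ t) t) t) :
    ∀ t ∈ Set.Icc (0 : ℝ) 1, IsTMI fun x₀ => Φ x₀ t :=
  flow_tmi_general v L hlip htri Φ hΦ0 hΦ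
end
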